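/- arXiv:2505.00601 — 4 statements merged into one kernel-verified Lean document; each statement's English description precedes it below -/
import Mathlib

section
/- The spectral radius of T equals 1, and 1 is an eigenvalue of T admitting an eigenfunction in L¹(ν) that is positive ν-a.e.; moreover any two eigenfunctions of T for the eigenvalue 1 are ν-a.e. proportional. If in addition 0 < ∫_{ℝ₊×Θ} λ(a,θ) S(θ) da ν(dθ) < ∞ for some ν-a.e. positive eigenfunction S of T for the eigenvalue 1, then there is a unique eigenfunction 𝔖_* ∈ L¹(ν) of T for the eigenvalue 1, positive ν-a.e., satisfying the normalization ∫_{ℝ₊×Θ} λ(a,θ) 𝔖_*(θ) da ν(dθ) = 1. -/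
/-!
`T` preserves integrals and satisfies `|T B| ≤ T |B|`, so it is a contraction of `L¹(ν)`; a
nonzero fixed point then pins its spectral radius at `1`.

Existence. Let `Q θ = K(θ, ·) ν` be the Markov kernel whose action on densities is `T`. Since
`K(θ', θ) ≤ g(θ) := sup K(·, θ)` with `g ∈ L¹(ν)`, every measure `μ Q` (`μ` a probability) lies
below the finite measure `g ν`. Hence the Cesàro means of an orbit of `Q` are uniformly dominated,
and a setwise limit along an ultrafilter is still countably additive (domination gives continuity
at `∅`), `Q`-invariant (the Cesàro means are almost invariant), and absolutely continuous with
respect to `ν`. Its density is the eigenfunction; it is positive because `K > 0`.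

Uniqueness. If `T S = S`, then `T |S| ≥ |S|` with equal integrals, so `T |S| = |S|`; equality in
`|∫ K S| ≤ ∫ K |S|` with `K > 0` forces `S` to have constant sign. So a nonzero eigenfunction has
nonzero integral, and `S₁ - c S₂`, with `c` chosen to make its integral vanish, is zero.
-/

open MeasureTheory Set

namespace Stmt6

/-- The measure `da ⊗ ν` on `ℝ₊ × Θ`. -/
noncomputable def ageProd {Θ : Type*} [MeasurableSpace Θ] (ν : Measure Θ) :
    Measure (ℝ × Θ) :=
  (volume.restrict (Set.Ioi (0 : ℝ))).prod ν

open Filter Topology ProbabilityTheory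
open scoped ENNReal

section UltrafilterLimit

variable {α ι : Type*} [MeasurableSpace α]

theorem isSetRing_measurableSet : IsSetRing {s : Set α | MeasurableSet s} :=
  ⟨MeasurableSet.empty, fun _ _ hs ht => hs.union ht, fun _ _ hs ht => hs.diff ht⟩

theorem exists_le_tendsto_ultrafilter_of_le (U : Ultrafilter ι) {μ : ι → Measure α}
    {G : Measure α} [IsFiniteMeasure G] (hμ : ∀ i, μ i ≤ G) :
    ∃ ρ ≤ G, ∀ s, MeasurableSet s → Tendsto (fun i => μ i s) U (𝓝 (ρ s)) := by
  set m : Set α → ℝ≥0∞ := fun s => (U.map fun i => μ i s).lim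
  have hm s : Tendsto (fun i => μ i s) U (𝓝 (m s)) := Ultrafilter.le_nhds_lim _
  have hmG s : m s ≤ G s := le_of_tendsto' (hm s) fun i => hμ i s
  have hm_empty : m ∅ = 0 := tendsto_nhds_unique (hm ∅) (by simp)
  have hm_union {s t : Set α} (_ : MeasurableSet s) (ht : MeasurableSet t) (hst : Disjoint s t) :
      m (s ∪ t) = m s + m t :=
    tendsto_nhds_unique (hm _) (by simpa only [measure_union hst ht] using (hm s).add (hm t))
  have hm_iUnion {f : ℕ → Set α} (hf : ∀ i, MeasurableSet (f i))
      (hd : Pairwise (Function.onFun Disjoint f)) : m (⋃ i, f i) = ∑' i, m (f i) := by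
    refine addContent_iUnion_eq_sum_of_tendsto_zero isSetRing_measurableSet
      (isSetRing_measurableSet.addContent_of_union m hm_empty hm_union)
      (fun s _ => ((hmG s).trans_lt (measure_lt_top G s)).ne) (fun s hs hanti hempty => ?_)
      hf (MeasurableSet.iUnion hf) hd
    have hG : Tendsto (fun n => G (s n)) atTop (𝓝 0) := by
      simpa [hempty, Function.comp_def] using tendsto_measure_iInter_atTop
        (fun n => (hs n).nullMeasurableSet) hanti ⟨0, measure_ne_top G _⟩
    exact tendsto_of_tendsto_of_tendsto_of_le_of_le tendsto_const_nhds hG (fun _ => zero_le)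
      fun n => hmG (s n)
  refine ⟨Measure.ofMeasurable (fun s _ => m s) hm_empty fun f hf hd => hm_iUnion hf hd,
    Measure.le_iff.2 fun s hs => (Measure.ofMeasurable_apply s hs).trans_le (hmG s),
    fun s hs => ?_⟩
  rw [Measure.ofMeasurable_apply s hs]
  exact hm s

theorem tendsto_lintegral_iSup_sub {μ : Measure α} {F : ℕ → α → ℝ≥0∞}
    (hF : ∀ n, Measurable (F n)) (hmono : Monotone F) (hfin : ∫⁻ a, ⨆ n, F n a ∂μ ≠ ∞) :
    Tendsto (fun n => ∫⁻ a, (⨆ m, F m a) - F n a ∂μ) atTop (𝓝 0) := by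
  have hF_le n a : F n a ≤ ⨆ m, F m a := le_iSup (fun m => F m a) n
  have hlim : Tendsto (fun n => ∫⁻ a, F n a ∂μ) atTop (𝓝 (∫⁻ a, ⨆ n, F n a ∂μ)) := by
    rw [lintegral_iSup hF hmono]
    exact tendsto_atTop_iSup fun m n hmn => lintegral_mono (hmono hmn)
  have h := ENNReal.Tendsto.sub tendsto_const_nhds hlim (Or.inl hfin)
  rw [tsub_self] at h
  refine h.congr fun n => (lintegral_sub (hF n) ?_ (ae_of_all _ (hF_le n))).symm
  exact ne_top_of_le_ne_top hfin (lintegral_mono (hF_le n))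

/-- Setwise convergence passes to monotone limits `F n ↑ f` because the error
`∫ (f - F n) ∂μ i ≤ ∫ (f - F n) ∂G` is uniform in `i`. -/
theorem tendsto_lintegral_ultrafilter_of_le {U : Ultrafilter ι} {μ : ι → Measure α}
    {ρ G : Measure α} [IsFiniteMeasure G] (hμ : ∀ i, μ i ≤ G)
    (hρ : ∀ s, MeasurableSet s → Tendsto (fun i => μ i s) U (𝓝 (ρ s)))
    {f : α → ℝ≥0∞} (hf : Measurable f) (hf1 : ∀ a, f a ≤ 1) :
    Tendsto (fun i => ∫⁻ a, f a ∂μ i) U (𝓝 (∫⁻ a, f a ∂ρ)) := by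
  refine Measurable.ennreal_induction (motive := fun f => (∀ a, f a ≤ 1) →
    Tendsto (fun i => ∫⁻ a, f a ∂μ i) U (𝓝 (∫⁻ a, f a ∂ρ))) ?_ ?_ ?_ hf hf1
  · intro c s hs hc
    simp only [lintegral_indicator_const hs]
    rcases s.eq_empty_or_nonempty with rfl | ⟨a, ha⟩
    · simp
    · have hc1 : c ≤ 1 := by simpa [ha] using hc a
      exact ENNReal.Tendsto.const_mul (hρ s hs)
        (Or.inr (ne_top_of_le_ne_top ENNReal.one_ne_top hc1))
  · intro f g _ hf _ ihf ihg h1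
    simp only [Pi.add_apply, lintegral_add_left hf]
    exact (ihf fun a => le_self_add.trans (h1 a)).add (ihg fun a => le_add_self.trans (h1 a))
  · intro F hF hmono ihF h1
    set f := fun a => ⨆ n, F n a
    have hF_le n a : F n a ≤ f a := le_iSup (fun n => F n a) n
    have ih n := ihF n fun a => (hF_le n a).trans (h1 a)
    set y := (U.map fun i => ∫⁻ a, f a ∂μ i).lim
    have hy : Tendsto (fun i => ∫⁻ a, f a ∂μ i) U (𝓝 y) := Ultrafilter.le_nhds_lim _
    suffices y = ∫⁻ a, f a ∂ρ by rwa [← this]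
    have hρF : Tendsto (fun n => ∫⁻ a, F n a ∂ρ) atTop (𝓝 (∫⁻ a, f a ∂ρ)) := by
      rw [lintegral_iSup hF hmono]
      exact tendsto_atTop_iSup fun m n hmn => lintegral_mono (hmono hmn)
    have hgap := tendsto_lintegral_iSup_sub hF hmono (μ := G)
      (ne_top_of_le_ne_top (measure_ne_top G univ) ((lintegral_mono h1).trans_eq (by simp)))
    refine le_antisymm (ge_of_tendsto' (by simpa using hρF.add hgap) fun n => ?_) ?_
    · refine le_of_tendsto_of_tendsto' hy ((ih n).add tendsto_const_nhds) fun i => ?_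
      calc ∫⁻ a, f a ∂μ i ≤ ∫⁻ a, F n a + (f a - F n a) ∂μ i :=
            lintegral_mono fun a => le_add_tsub
        _ = ∫⁻ a, F n a ∂μ i + ∫⁻ a, (f a - F n a) ∂μ i := lintegral_add_left (hF n) _
        _ ≤ ∫⁻ a, F n a ∂μ i + ∫⁻ a, (f a - F n a) ∂G := by gcongr; exact hμ i
    · exact le_of_tendsto' hρF fun n =>
        le_of_tendsto_of_tendsto' (ih n) hy fun i => lintegral_mono (hF_le n)

end UltrafilterLimit

section InvariantMeasure

variable {α : Type*} [MeasurableSpace α]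

theorem comp_le_of_forall_le {β : Type*} [MeasurableSpace β] {κ : Kernel β α} {G : Measure α}
    (hκ : ∀ b, κ b ≤ G) (μ : Measure β) [IsProbabilityMeasure μ] : κ ∘ₘ μ ≤ G := by
  refine Measure.le_iff.2 fun s hs => ?_
  rw [Measure.bind_apply hs κ.aemeasurable]
  calc ∫⁻ b, κ b s ∂μ ≤ ∫⁻ _, G s ∂μ := lintegral_mono fun b => hκ b s
    _ = G s := by simp

variable (κ : Kernel α α) (μ : Measure α)

noncomputable def cesaroOrbit (n : ℕ) : Measure α :=
  (n : ℝ≥0∞)⁻¹ • ∑ j ∈ Finset.range n, (fun ν => κ ∘ₘ ν)^[j] μ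

theorem isProbabilityMeasure_iterate_comp [IsMarkovKernel κ] [IsProbabilityMeasure μ] (j : ℕ) :
    IsProbabilityMeasure ((fun ν => κ ∘ₘ ν)^[j] μ) := by
  induction j with
  | zero => assumption
  | succ j ih => rw [Function.iterate_succ_apply']; infer_instance

theorem iterate_comp_le [IsMarkovKernel κ] [IsProbabilityMeasure μ] {G : Measure α}
    (hκ : ∀ a, κ a ≤ G) (hμ : μ ≤ G) (j : ℕ) : (fun ν => κ ∘ₘ ν)^[j] μ ≤ G := by
  cases j with
  | zero => exact hμ
  | succ j =>
    have := isProbabilityMeasure_iterate_comp κ μ j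
    rw [Function.iterate_succ_apply']
    exact comp_le_of_forall_le hκ _

theorem cesaroOrbit_le [IsMarkovKernel κ] [IsProbabilityMeasure μ] {G : Measure α}
    (hκ : ∀ a, κ a ≤ G) (hμ : μ ≤ G) (n : ℕ) : cesaroOrbit κ μ n ≤ G := by
  refine Measure.le_iff.2 fun s _ => ?_
  calc cesaroOrbit κ μ n s
      = (n : ℝ≥0∞)⁻¹ * ∑ j ∈ Finset.range n, (fun ν => κ ∘ₘ ν)^[j] μ s := by simp [cesaroOrbit]
    _ ≤ (n : ℝ≥0∞)⁻¹ * ∑ _j ∈ Finset.range n, G s := by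
        gcongr with j; exact iterate_comp_le κ μ hκ hμ j
    _ ≤ G s := by
        rw [Finset.sum_const, Finset.card_range, nsmul_eq_mul, ← mul_assoc]
        exact mul_le_of_le_one_left zero_le (ENNReal.inv_mul_le_one _)

theorem cesaroOrbit_apply_univ [IsMarkovKernel κ] [IsProbabilityMeasure μ] {n : ℕ} (hn : n ≠ 0) :
    cesaroOrbit κ μ n univ = 1 := by
  have := isProbabilityMeasure_iterate_comp κ μ
  simp [cesaroOrbit, ENNReal.inv_mul_cancel (Nat.cast_ne_zero.2 hn) (ENNReal.natCast_ne_top n)]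

theorem lintegral_cesaroOrbit (f : α → ℝ≥0∞) (n : ℕ) :
    ∫⁻ a, f a ∂cesaroOrbit κ μ n =
      (n : ℝ≥0∞)⁻¹ * ∑ j ∈ Finset.range n, ∫⁻ a, f a ∂(fun ν => κ ∘ₘ ν)^[j] μ := by
  rw [cesaroOrbit, lintegral_smul_measure, lintegral_finsetSum_measure, smul_eq_mul]

theorem lintegral_kernel_cesaroOrbit_add [IsMarkovKernel κ] {s : Set α} (hs : MeasurableSet s)
    (n : ℕ) :
    ∫⁻ a, κ a s ∂cesaroOrbit κ μ n + (n : ℝ≥0∞)⁻¹ * μ s =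
      cesaroOrbit κ μ n s + (n : ℝ≥0∞)⁻¹ * (fun ν => κ ∘ₘ ν)^[n] μ s := by
  have hstep j : ∫⁻ a, κ a s ∂(fun ν => κ ∘ₘ ν)^[j] μ = (fun ν => κ ∘ₘ ν)^[j + 1] μ s := by
    rw [Function.iterate_succ_apply', Measure.bind_apply hs κ.aemeasurable]
  rw [lintegral_cesaroOrbit]
  simp only [hstep, cesaroOrbit, Measure.smul_apply, Measure.coe_finsetSum, Finset.sum_apply,
    smul_eq_mul, ← mul_add]
  congr 1
  exact (Finset.sum_range_succ' (fun j => (fun ν => κ ∘ₘ ν)^[j] μ s) n).symm.trans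
    (Finset.sum_range_succ _ n)

/-- Krylov–Bogolyubov, with the domination by `G` in place of tightness. -/
theorem exists_isProbabilityMeasure_invariant_le [Nonempty α] [IsMarkovKernel κ] {G : Measure α}
    [IsFiniteMeasure G] (hκ : ∀ a, κ a ≤ G) :
    ∃ ρ, IsProbabilityMeasure ρ ∧ κ.Invariant ρ ∧ ρ ≤ G := by
  set μ := κ (Classical.arbitrary α)
  set U : Ultrafilter ℕ := Ultrafilter.of atTop
  have hU : (U : Filter ℕ) ≤ atTop := Ultrafilter.of_le atTop
  have hle := cesaroOrbit_le κ μ hκ (hκ _)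
  obtain ⟨ρ, hρG, hρ⟩ := exists_le_tendsto_ultrafilter_of_le U hle
  have hsmall {c : ℕ → ℝ≥0∞} (hc : ∀ n, c n ≤ 1) :
      Tendsto (fun n : ℕ => (n : ℝ≥0∞)⁻¹ * c n) U (𝓝 0) :=
    tendsto_of_tendsto_of_tendsto_of_le_of_le tendsto_const_nhds
      (ENNReal.tendsto_inv_nat_nhds_zero.mono_left hU) (fun _ => zero_le)
      fun n => mul_le_of_le_one_right' (hc n)
  refine ⟨ρ, ⟨?_⟩, ?_, hρG⟩
  · refine tendsto_nhds_unique (hρ univ .univ) (tendsto_const_nhds.congr' ?_)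
    filter_upwards [hU (eventually_ne_atTop 0)] with n hn
    exact (cesaroOrbit_apply_univ κ μ hn).symm
  · ext s hs
    have hlim := tendsto_lintegral_ultrafilter_of_le hle hρ (κ.measurable_coe hs)
      fun a => prob_le_one
    rw [← Measure.bind_apply hs κ.aemeasurable] at hlim
    refine tendsto_nhds_unique
      (f := fun n => ∫⁻ a, κ a s ∂cesaroOrbit κ μ n + (n : ℝ≥0∞)⁻¹ * μ s)
      (by simpa using hlim.add (hsmall fun _ => prob_le_one)) ?_
    simp_rw [lintegral_kernel_cesaroOrbit_add κ μ hs]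
    have := isProbabilityMeasure_iterate_comp κ μ
    simpa using (hρ s hs).add (hsmall fun _ => prob_le_one)

theorem ae_eq_lintegral_of_invariant_withDensity {ν : Measure α} [SigmaFinite ν]
    {k : α → α → ℝ≥0∞} (hk : Measurable (Function.uncurry k)) {h : α → ℝ≥0∞} (hh : Measurable h)
    (hinv : ((Kernel.const α ν).withDensity k).Invariant (ν.withDensity h)) :
    (fun b => ∫⁻ a, k a b * h a ∂ν) =ᵐ[ν] h := by
  have hkh : Measurable fun p : α × α => k p.1 p.2 * h p.1 := hk.mul (hh.comp measurable_fst)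
  refine ae_eq_of_forall_setLIntegral_eq_of_sigmaFinite hkh.lintegral_prod_left' hh
    fun s hs _ => ?_
  calc ∫⁻ b in s, ∫⁻ a, k a b * h a ∂ν ∂ν = ∫⁻ a, ∫⁻ b in s, k a b * h a ∂ν ∂ν :=
        lintegral_lintegral_swap (hkh.comp measurable_swap).aemeasurable
    _ = ∫⁻ a, h a * (Kernel.const α ν).withDensity k a s ∂ν := by
        refine lintegral_congr fun a => ?_
        rw [Kernel.withDensity_apply' _ hk, Kernel.const_apply,
          lintegral_mul_const (h a) (f := k a) (hk.comp measurable_prodMk_left), mul_comm]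
    _ = ((Kernel.const α ν).withDensity k ∘ₘ ν.withDensity h) s := by
        rw [Measure.bind_apply hs (Kernel.aemeasurable _),
          lintegral_withDensity_eq_lintegral_mul _ hh (Kernel.measurable_coe _ hs)]
        rfl
    _ = ∫⁻ b in s, h b ∂ν := by rw [hinv.def, withDensity_apply _ hs]

end InvariantMeasure

theorem ae_nonneg_or_ae_nonpos_of_abs_integral_eq {α : Type*} [MeasurableSpace α]
    {μ : Measure α} {f : α → ℝ} (hf : Integrable f μ) (h : |∫ a, f a ∂μ| = ∫ a, |f a| ∂μ) :
    0 ≤ᵐ[μ] f ∨ f ≤ᵐ[μ] 0 := by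
  rcases (abs_eq (integral_nonneg fun a => abs_nonneg (f a))).1 h with h | h
  · left
    have h0 : ∫ a, (|f a| - f a) ∂μ = 0 := by rw [integral_sub hf.abs hf, h, sub_self]
    filter_upwards [(integral_eq_zero_iff_of_nonneg (fun a => sub_nonneg.2 (le_abs_self _))
      (hf.abs.sub hf)).1 h0] with a ha
    simpa [sub_eq_zero] using ha
  · right
    have h0 : ∫ a, (|f a| + f a) ∂μ = 0 := by rw [integral_add hf.abs hf, h, add_neg_cancel]
    filter_upwards [(integral_eq_zero_iff_of_nonneg (fun a => neg_le_iff_add_nonneg'.1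
      (neg_abs_le _)) (hf.abs.add hf)).1 h0] with a ha
    linarith [abs_nonneg (f a), show |f a| + f a = 0 from ha]

theorem spectralRadius_eq_one_of_norm_le_one_of_apply_eq {𝕜 E : Type*} [NontriviallyNormedField 𝕜]
    [NormedAddCommGroup E] [NormedSpace 𝕜 E] [CompleteSpace E] {T : E →L[𝕜] E} (hT : ‖T‖ ≤ 1)
    {v : E} (hv : v ≠ 0) (hTv : T v = v) : spectralRadius 𝕜 T = 1 := by
  have : Nontrivial E := ⟨⟨v, 0, hv⟩⟩
  have h1 : (1 : 𝕜) ∈ spectrum 𝕜 T := by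
    rw [ContinuousLinearMap.spectrum_eq]
    refine Module.End.HasEigenvalue.mem_spectrum
      (Module.End.hasEigenvalue_of_hasEigenvector ⟨Module.End.mem_eigenspace_iff.2 ?_, hv⟩)
    simpa using hTv
  refine le_antisymm ((spectrum.spectralRadius_le_nnnorm T).trans (by exact_mod_cast hT)) ?_
  simpa [spectralRadius] using
    le_iSup₂ (f := fun k (_ : k ∈ spectrum 𝕜 T) => (‖k‖₊ : ℝ≥0∞)) 1 h1

section KernelOperator

variable {Θ : Type*} [MeasurableSpace Θ] {ν : Measure Θ} {K : Θ → Θ → ℝ}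

structure IsPositiveTransitionDensity (ν : Measure Θ) (K : Θ → Θ → ℝ) : Prop where
  measurable : Measurable fun p : Θ × Θ => K p.1 p.2
  pos : ∀ θ θ', 0 < K θ θ'
  integral_eq_one : ∀ θ, ∫ θ', K θ θ' ∂ν = 1
  bddAbove : ∀ θ, BddAbove (range fun θ' => K θ' θ)

theorem IsPositiveTransitionDensity.nonneg (hK : IsPositiveTransitionDensity ν K) (θ θ' : Θ) :
    0 ≤ K θ θ' :=
  (hK.pos θ θ').le

noncomputable def kernelOp (ν : Measure Θ) (K : Θ → Θ → ℝ) (B : Θ → ℝ) (θ : Θ) : ℝ :=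
  ∫ θ', K θ' θ * B θ' ∂ν

theorem kernelOp_congr_ae {B B' : Θ → ℝ} (h : B =ᵐ[ν] B') : kernelOp ν K B = kernelOp ν K B' :=
  funext fun _ => integral_congr_ae (h.mono fun _ hθ => by simp only [hθ])

theorem kernelOp_smul (c : ℝ) (B : Θ → ℝ) : kernelOp ν K (c • B) = c • kernelOp ν K B := by
  ext θ
  simp only [kernelOp, Pi.smul_apply, smul_eq_mul, ← integral_const_mul]
  congr 1 with θ'
  ring

theorem abs_kernelOp_le (hK_nonneg : ∀ θ θ', 0 ≤ K θ θ') (B : Θ → ℝ) (θ : Θ) :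
    |kernelOp ν K B θ| ≤ kernelOp ν K (fun θ' => |B θ'|) θ := by
  refine (abs_integral_le_integral_abs).trans_eq (integral_congr_ae (ae_of_all _ fun θ' => ?_))
  simp only [abs_mul, abs_of_nonneg (hK_nonneg θ' θ)]

theorem integrable_kernel_mul (hK : IsPositiveTransitionDensity ν K) {B : Θ → ℝ}
    (hB : Integrable B ν) (θ : Θ) : Integrable (fun θ' => K θ' θ * B θ') ν := by
  refine Integrable.mono' (hB.norm.const_mul (⨆ θ', K θ' θ))
    ((hK.measurable.comp (measurable_id.prodMk measurable_const)).aestronglyMeasurable.mul hB.1)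
    (ae_of_all _ fun θ' => ?_)
  rw [norm_mul, Real.norm_eq_abs, abs_of_pos (hK.pos θ' θ)]
  exact mul_le_mul_of_nonneg_right (le_ciSup (hK.bddAbove θ) θ') (norm_nonneg _)

theorem kernelOp_add (hK : IsPositiveTransitionDensity ν K) {B C : Θ → ℝ} (hB : Integrable B ν)
    (hC : Integrable C ν) : kernelOp ν K (B + C) = kernelOp ν K B + kernelOp ν K C := by
  ext θ
  simp only [kernelOp, Pi.add_apply, mul_add]
  exact integral_add (integrable_kernel_mul hK hB θ) (integrable_kernel_mul hK hC θ)

theorem kernelOp_sub (hK : IsPositiveTransitionDensity ν K) {B C : Θ → ℝ} (hB : Integrable B ν)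
    (hC : Integrable C ν) : kernelOp ν K (B - C) = kernelOp ν K B - kernelOp ν K C := by
  ext θ
  simp only [kernelOp, Pi.sub_apply, mul_sub]
  exact integral_sub (integrable_kernel_mul hK hB θ) (integrable_kernel_mul hK hC θ)

theorem integrable_kernel_mul_prod [SFinite ν] (hK_meas : Measurable fun p : Θ × Θ => K p.1 p.2)
    (hK_nonneg : ∀ θ θ', 0 ≤ K θ θ') (hK_int : ∀ θ, ∫ θ', K θ θ' ∂ν = 1) {B : Θ → ℝ}
    (hB : Integrable B ν) : Integrable (fun p : Θ × Θ => K p.1 p.2 * B p.1) (ν.prod ν) := by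
  have hmeas : AEStronglyMeasurable (fun p : Θ × Θ => K p.1 p.2 * B p.1) (ν.prod ν) :=
    hK_meas.aestronglyMeasurable.mul hB.1.comp_fst
  refine (integrable_prod_iff hmeas).2 ⟨ae_of_all _ fun θ => ?_, hB.norm.congr ?_⟩
  · exact (Integrable.of_integral_ne_zero (by simp [hK_int θ])).mul_const (B θ)
  · refine ae_of_all _ fun θ => ?_
    simp only [norm_mul, Real.norm_eq_abs, abs_of_nonneg (hK_nonneg _ _), integral_mul_const,
      hK_int θ, one_mul]

theorem integrable_kernelOp [SFinite ν] (hK_meas : Measurable fun p : Θ × Θ => K p.1 p.2)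
    (hK_nonneg : ∀ θ θ', 0 ≤ K θ θ') (hK_int : ∀ θ, ∫ θ', K θ θ' ∂ν = 1) {B : Θ → ℝ}
    (hB : Integrable B ν) : Integrable (kernelOp ν K B) ν :=
  (integrable_kernel_mul_prod hK_meas hK_nonneg hK_int hB).swap.integral_prod_left

theorem integral_kernelOp [SFinite ν] (hK_meas : Measurable fun p : Θ × Θ => K p.1 p.2)
    (hK_nonneg : ∀ θ θ', 0 ≤ K θ θ') (hK_int : ∀ θ, ∫ θ', K θ θ' ∂ν = 1) {B : Θ → ℝ}
    (hB : Integrable B ν) : ∫ θ, kernelOp ν K B θ ∂ν = ∫ θ, B θ ∂ν := by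
  simp only [kernelOp]
  rw [integral_integral_swap (f := fun θ θ' => K θ' θ * B θ')
    (integrable_kernel_mul_prod hK_meas hK_nonneg hK_int hB).swap]
  simp only [integral_mul_const, hK_int, one_mul]

theorem kernelOp_pos (hK : IsPositiveTransitionDensity ν K) {B : Θ → ℝ} (hB : Integrable B ν)
    (hB_nonneg : 0 ≤ᵐ[ν] B) (hB_pos : 0 < ∫ θ, B θ ∂ν) (θ : Θ) : 0 < kernelOp ν K B θ := by
  have hnn : 0 ≤ᵐ[ν] fun θ' => K θ' θ * B θ' :=
    hB_nonneg.mono fun θ' h => mul_nonneg (hK.nonneg θ' θ) h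
  have hsupp : Function.support (fun θ' => K θ' θ * B θ') = Function.support B := by
    ext θ'
    simp [(hK.pos θ' θ).ne']
  rw [kernelOp, integral_pos_iff_support_of_nonneg_ae hnn (integrable_kernel_mul hK hB θ), hsupp]
  rwa [← integral_pos_iff_support_of_nonneg_ae hB_nonneg hB]

theorem kernelOp_abs_ae_eq [SFinite ν] (hK : IsPositiveTransitionDensity ν K) {S : Θ → ℝ}
    (hS : Integrable S ν) (hS_eq : kernelOp ν K S =ᵐ[ν] S) :
    kernelOp ν K (fun θ => |S θ|) =ᵐ[ν] fun θ => |S θ| := by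
  have hle : (fun θ => |S θ|) ≤ᵐ[ν] kernelOp ν K (fun θ => |S θ|) := by
    filter_upwards [hS_eq] with θ hθ
    exact hθ ▸ abs_kernelOp_le hK.nonneg S θ
  refine ((integral_eq_iff_of_ae_le hS.abs ?_ hle).1 ?_).symm
  · exact integrable_kernelOp hK.measurable hK.nonneg hK.integral_eq_one hS.abs
  · exact (integral_kernelOp hK.measurable hK.nonneg hK.integral_eq_one hS.abs).symm

theorem ae_nonneg_or_ae_nonpos_of_kernelOp_eq [SFinite ν] [NeZero ν]
    (hK : IsPositiveTransitionDensity ν K) {S : Θ → ℝ} (hS : Integrable S ν)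
    (hS_eq : kernelOp ν K S =ᵐ[ν] S) : 0 ≤ᵐ[ν] S ∨ S ≤ᵐ[ν] 0 := by
  obtain ⟨θ, hθ, hθ_abs⟩ := (hS_eq.and (kernelOp_abs_ae_eq hK hS hS_eq)).exists
  have habs : |∫ θ', K θ' θ * S θ' ∂ν| = ∫ θ', |K θ' θ * S θ'| ∂ν := by
    simp only [abs_mul, abs_of_pos (hK.pos _ θ)]
    exact (congrArg abs hθ).trans hθ_abs.symm
  refine (ae_nonneg_or_ae_nonpos_of_abs_integral_eq (integrable_kernel_mul hK hS θ) habs).imp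
    (fun h => ?_) fun h => ?_
  · exact h.mono fun θ' h' => nonneg_of_mul_nonneg_right h' (hK.pos θ' θ)
  · exact h.mono fun θ' h' => nonpos_of_mul_nonpos_right h' (hK.pos θ' θ)

theorem integral_ne_zero_of_kernelOp_eq [SFinite ν] [NeZero ν]
    (hK : IsPositiveTransitionDensity ν K) {S : Θ → ℝ} (hS : Integrable S ν)
    (hS_ne : ¬ S =ᵐ[ν] 0) (hS_eq : kernelOp ν K S =ᵐ[ν] S) : ∫ θ, S θ ∂ν ≠ 0 := by
  intro h0
  rcases ae_nonneg_or_ae_nonpos_of_kernelOp_eq hK hS hS_eq with h | h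
  · exact hS_ne ((integral_eq_zero_iff_of_nonneg_ae h hS).1 h0)
  · refine hS_ne ?_
    have hneg := (integral_eq_zero_iff_of_nonneg_ae (h.mono fun _ => neg_nonneg.2) hS.neg).1
      (by rw [integral_neg, h0, neg_zero])
    filter_upwards [hneg] with θ hθ
    simpa using hθ

theorem exists_ae_eq_const_mul_of_kernelOp_eq [SFinite ν] [NeZero ν]
    (hK : IsPositiveTransitionDensity ν K) {S₁ S₂ : Θ → ℝ} (h₁ : Integrable S₁ ν)
    (h₂ : Integrable S₂ ν) (hS₂ : ¬ S₂ =ᵐ[ν] 0) (he₁ : kernelOp ν K S₁ =ᵐ[ν] S₁)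
    (he₂ : kernelOp ν K S₂ =ᵐ[ν] S₂) : ∃ c : ℝ, S₁ =ᵐ[ν] fun θ => c * S₂ θ := by
  set c := (∫ θ, S₁ θ ∂ν) / ∫ θ, S₂ θ ∂ν
  have hD : Integrable (S₁ - c • S₂) ν := h₁.sub (h₂.smul c)
  have hD_eq : kernelOp ν K (S₁ - c • S₂) =ᵐ[ν] S₁ - c • S₂ := by
    rw [kernelOp_sub hK h₁ (h₂.smul c), kernelOp_smul]
    filter_upwards [he₁, he₂] with θ h₁ h₂
    simp [h₁, h₂]
  have hD_int : ∫ θ, (S₁ - c • S₂) θ ∂ν = 0 := by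
    simp only [Pi.sub_apply, Pi.smul_apply, smul_eq_mul]
    rw [integral_sub h₁ (h₂.const_mul c), integral_const_mul,
      div_mul_cancel₀ _ (integral_ne_zero_of_kernelOp_eq hK h₂ hS₂ he₂), sub_self]
  have hD0 : S₁ - c • S₂ =ᵐ[ν] 0 := by
    by_contra hne
    exact integral_ne_zero_of_kernelOp_eq hK hD hne hD_eq hD_int
  refine ⟨c, hD0.mono fun θ hθ => ?_⟩
  simpa [sub_eq_zero] using hθ

section L1

variable [SFinite ν]

noncomputable def kernelOpLinearL1 (hK : IsPositiveTransitionDensity ν K) :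
    Lp ℝ 1 ν →ₗ[ℝ] Lp ℝ 1 ν where
  toFun B := (integrable_kernelOp hK.measurable hK.nonneg hK.integral_eq_one
    (L1.integrable_coeFn B)).toL1 _
  map_add' B C := by
    rw [← Integrable.toL1_add, Integrable.toL1_eq_toL1_iff,
      kernelOp_congr_ae (Lp.coeFn_add B C),
      kernelOp_add hK (L1.integrable_coeFn B) (L1.integrable_coeFn C)]
  map_smul' c B := by
    rw [RingHom.id_apply, ← Integrable.toL1_smul', Integrable.toL1_eq_toL1_iff,
      kernelOp_congr_ae (Lp.coeFn_smul c B), kernelOp_smul]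

theorem norm_kernelOpLinearL1_le (hK : IsPositiveTransitionDensity ν K) (B : Lp ℝ 1 ν) :
    ‖kernelOpLinearL1 hK B‖ ≤ 1 * ‖B‖ := by
  have hB := L1.integrable_coeFn B
  rw [one_mul, kernelOpLinearL1, LinearMap.coe_mk, AddHom.coe_mk,
    L1.norm_of_fun_eq_integral_norm, L1.norm_eq_integral_norm]
  calc ∫ θ, ‖kernelOp ν K B θ‖ ∂ν ≤ ∫ θ, kernelOp ν K (fun θ' => |B θ'|) θ ∂ν :=
        integral_mono (integrable_kernelOp hK.measurable hK.nonneg hK.integral_eq_one hB).norm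
          (integrable_kernelOp hK.measurable hK.nonneg hK.integral_eq_one hB.abs)
          fun θ => abs_kernelOp_le hK.nonneg B θ
    _ = ∫ θ, ‖B θ‖ ∂ν := integral_kernelOp hK.measurable hK.nonneg hK.integral_eq_one hB.abs

noncomputable def kernelOpL1 (hK : IsPositiveTransitionDensity ν K) :
    Lp ℝ 1 ν →L[ℝ] Lp ℝ 1 ν :=
  (kernelOpLinearL1 hK).mkContinuous 1 (norm_kernelOpLinearL1_le hK)

theorem kernelOpL1_ae_eq (hK : IsPositiveTransitionDensity ν K) (B : Lp ℝ 1 ν) :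
    kernelOpL1 hK B =ᵐ[ν] kernelOp ν K B :=
  (integrable_kernelOp hK.measurable hK.nonneg hK.integral_eq_one
    (L1.integrable_coeFn B)).coeFn_toL1

theorem spectralRadius_kernelOpL1 (hK : IsPositiveTransitionDensity ν K)
    {S : Θ → ℝ} (hS : Integrable S ν) (hS_ne : ¬ S =ᵐ[ν] 0) (hS_eq : kernelOp ν K S =ᵐ[ν] S) :
    spectralRadius ℝ (kernelOpL1 hK) = 1 := by
  refine spectralRadius_eq_one_of_norm_le_one_of_apply_eq
    (LinearMap.mkContinuous_norm_le _ zero_le_one _) (v := hS.toL1 S) (fun h => hS_ne ?_) ?_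
  · rwa [← Integrable.toL1_zero (integrable_zero Θ ℝ ν), Integrable.toL1_eq_toL1_iff] at h
  · refine Lp.ext ((kernelOpL1_ae_eq hK _).trans ?_)
    rw [kernelOp_congr_ae hS.coeFn_toL1]
    exact hS_eq.trans hS.coeFn_toL1.symm

end L1

noncomputable def transitionKernel (ν : Measure Θ) [SFinite ν] (K : Θ → Θ → ℝ) : Kernel Θ Θ :=
  (Kernel.const Θ ν).withDensity fun θ θ' => ENNReal.ofReal (K θ θ')

theorem transitionKernel_apply [SFinite ν] (hK : IsPositiveTransitionDensity ν K) (θ : Θ) :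
    transitionKernel ν K θ = ν.withDensity fun θ' => ENNReal.ofReal (K θ θ') := by
  rw [transitionKernel, Kernel.withDensity_apply _ hK.measurable.ennreal_ofReal, Kernel.const_apply]

theorem isMarkovKernel_transitionKernel [SFinite ν] (hK : IsPositiveTransitionDensity ν K) :
    IsMarkovKernel (transitionKernel ν K) := by
  refine ⟨fun θ => ⟨?_⟩⟩
  rw [transitionKernel_apply hK, withDensity_apply _ .univ, Measure.restrict_univ,
    ← ofReal_integral_eq_lintegral_ofReal
      (Integrable.of_integral_ne_zero (by simp [hK.integral_eq_one θ]))
      (ae_of_all _ (hK.nonneg θ)), hK.integral_eq_one, ENNReal.ofReal_one]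

theorem transitionKernel_le [SFinite ν] (hK : IsPositiveTransitionDensity ν K) (θ : Θ) :
    transitionKernel ν K θ ≤ ν.withDensity fun θ' => ENNReal.ofReal (⨆ θ'', K θ'' θ') := by
  rw [transitionKernel_apply hK]
  exact withDensity_mono (ae_of_all _ fun θ' =>
    ENNReal.ofReal_le_ofReal (le_ciSup (hK.bddAbove θ') θ))

theorem kernelOp_toReal (hK : IsPositiveTransitionDensity ν K) {h : Θ → ℝ≥0∞}
    (hh : Measurable h) (hh_fin : ∀ᵐ θ ∂ν, h θ < ∞) (θ : Θ) :
    kernelOp ν K (fun θ => (h θ).toReal) θ =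
      (∫⁻ θ', ENNReal.ofReal (K θ' θ) * h θ' ∂ν).toReal := by
  rw [kernelOp, integral_eq_lintegral_of_nonneg_ae
    (ae_of_all _ fun θ' => mul_nonneg (hK.nonneg θ' θ) ENNReal.toReal_nonneg)
    ((hK.measurable.comp (measurable_id.prodMk measurable_const)).mul
      hh.ennreal_toReal).aestronglyMeasurable]
  congr 1
  refine lintegral_congr_ae (hh_fin.mono fun θ' hθ' => ?_)
  dsimp only
  rw [ENNReal.ofReal_mul (hK.nonneg θ' θ), ENNReal.ofReal_toReal hθ'.ne]

theorem exists_integrable_ae_pos_kernelOp_eq [IsProbabilityMeasure ν]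
    (hK : IsPositiveTransitionDensity ν K) (hK_sup : Integrable (fun θ => ⨆ θ', K θ' θ) ν) :
    ∃ S : Θ → ℝ, Integrable S ν ∧ (∀ᵐ θ ∂ν, 0 < S θ) ∧ kernelOp ν K S =ᵐ[ν] S := by
  have := nonempty_of_isProbabilityMeasure ν
  have := isMarkovKernel_transitionKernel hK
  have := isFiniteMeasure_withDensity_ofReal hK_sup.2
  obtain ⟨ρ, hρ, hρ_inv, hρ_le⟩ :=
    exists_isProbabilityMeasure_invariant_le (transitionKernel ν K) (transitionKernel_le hK)
  have hρν : ρ ≪ ν := (Measure.absolutelyContinuous_of_le hρ_le).trans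
    (withDensity_absolutelyContinuous _ _)
  set h := ρ.rnDeriv ν
  have hh : Measurable h := Measure.measurable_rnDeriv ρ ν
  have hh_fin : ∀ᵐ θ ∂ν, h θ < ∞ := Measure.rnDeriv_lt_top ρ ν
  have hinv : (transitionKernel ν K).Invariant (ν.withDensity h) := by
    rwa [Measure.withDensity_rnDeriv_eq ρ ν hρν]
  have hh_eq := ae_eq_lintegral_of_invariant_withDensity hK.measurable.ennreal_ofReal hh hinv
  have hh_int : ∫⁻ θ, h θ ∂ν = 1 := by rw [Measure.lintegral_rnDeriv hρν, measure_univ]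
  set S := fun θ => (h θ).toReal
  have hS : Integrable S ν :=
    integrable_toReal_of_lintegral_ne_top hh.aemeasurable (by simp [hh_int])
  have hS_eq : kernelOp ν K S =ᵐ[ν] S := by
    filter_upwards [hh_eq] with θ hθ
    rw [kernelOp_toReal hK hh hh_fin, hθ]
  have hS_pos : 0 < ∫ θ, S θ ∂ν := by
    rw [integral_toReal hh.aemeasurable hh_fin, hh_int, ENNReal.toReal_one]
    exact one_pos
  refine ⟨S, hS, ?_, hS_eq⟩
  filter_upwards [hS_eq] with θ hθ
  exact hθ ▸ kernelOp_pos hK hS (ae_of_all _ fun _ => ENNReal.toReal_nonneg) hS_pos θ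

theorem not_ae_eq_zero_of_ae_pos [NeZero ν] {S : Θ → ℝ} (hS : ∀ᵐ θ ∂ν, 0 < S θ) :
    ¬ S =ᵐ[ν] 0 := fun h0 =>
  let ⟨_, hpos, hzero⟩ := (hS.and h0).exists
  hpos.ne' hzero

theorem integral_prod_mul_of_ae_eq_const_mul {β : Type*} [MeasurableSpace β] {μ : Measure β}
    [SFinite μ] (lam : β → Θ → ℝ) {S S' : Θ → ℝ} {c : ℝ} (h : S' =ᵐ[ν] fun θ => c * S θ) :
    ∫ p, lam p.1 p.2 * S' p.2 ∂(μ.prod ν) = c * ∫ p, lam p.1 p.2 * S p.2 ∂(μ.prod ν) := by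
  rw [← integral_const_mul]
  refine integral_congr_ae ((Measure.quasiMeasurePreserving_snd.ae_eq h).mono fun p hp => ?_)
  simp only [Function.comp_apply] at hp
  simp only [hp]
  ring

theorem ae_eq_of_kernelOp_eq_of_integral_prod_eq [SFinite ν] [NeZero ν]
    (hK : IsPositiveTransitionDensity ν K) {β : Type*} [MeasurableSpace β] {μ : Measure β}
    [SFinite μ] (lam : β → Θ → ℝ) {S₁ S₂ : Θ → ℝ} (h₁ : Integrable S₁ ν) (h₂ : Integrable S₂ ν)
    (hS₂ : ¬ S₂ =ᵐ[ν] 0) (he₁ : kernelOp ν K S₁ =ᵐ[ν] S₁) (he₂ : kernelOp ν K S₂ =ᵐ[ν] S₂)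
    (hI : ∫ p, lam p.1 p.2 * S₁ p.2 ∂(μ.prod ν) = ∫ p, lam p.1 p.2 * S₂ p.2 ∂(μ.prod ν))
    (hI₂ : ∫ p, lam p.1 p.2 * S₂ p.2 ∂(μ.prod ν) ≠ 0) : S₁ =ᵐ[ν] S₂ := by
  obtain ⟨c, hc⟩ := exists_ae_eq_const_mul_of_kernelOp_eq hK h₁ h₂ hS₂ he₁ he₂
  rw [integral_prod_mul_of_ae_eq_const_mul lam hc] at hI
  have hc1 : c = 1 := (mul_eq_right₀ hI₂).1 hI
  filter_upwards [hc] with θ hθ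
  rw [hθ, hc1, one_mul]

end KernelOperator

theorem perron_frobenius_general {Θ : Type*} [MeasurableSpace Θ]
    (ν : Measure Θ) [IsProbabilityMeasure ν]
    (lam : ℝ → Θ → ℝ)
    (K : Θ → Θ → ℝ)
    (hK_meas : Measurable fun p : Θ × Θ => K p.1 p.2)
    (hK_pos : ∀ θ θ', 0 < K θ θ')
    (hK_int : ∀ θ, ∫ θ', K θ θ' ∂ν = 1)
    (hK_bdd : ∀ θ, BddAbove (Set.range fun θ' => K θ' θ))
    (hK_sup_int : Integrable (fun θ => ⨆ θ', K θ' θ) ν) :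
    -- the spectral radius of `T` equals 1
    (∃ T : Lp ℝ 1 ν →L[ℝ] Lp ℝ 1 ν,
      (∀ B : Lp ℝ 1 ν, (T B : Θ → ℝ) =ᵐ[ν] fun θ => ∫ θ', K θ' θ * B θ' ∂ν)
      ∧ spectralRadius ℝ T = 1)
    -- `1` is an eigenvalue of `T` with a ν-a.e. positive eigenfunction in `L¹(ν)`
    ∧ (∃ S : Θ → ℝ, Integrable S ν ∧ (∀ᵐ θ ∂ν, 0 < S θ)
        ∧ (fun θ => ∫ θ', K θ' θ * S θ' ∂ν) =ᵐ[ν] S)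
    -- any two eigenfunctions for the eigenvalue `1` are ν-a.e. proportional
    ∧ (∀ S₁ S₂ : Θ → ℝ, Integrable S₁ ν → Integrable S₂ ν →
        ¬ (S₁ =ᵐ[ν] 0) → ¬ (S₂ =ᵐ[ν] 0) →
        ((fun θ => ∫ θ', K θ' θ * S₁ θ' ∂ν) =ᵐ[ν] S₁) →
        ((fun θ => ∫ θ', K θ' θ * S₂ θ' ∂ν) =ᵐ[ν] S₂) →
        ∃ c : ℝ, S₁ =ᵐ[ν] fun θ => c * S₂ θ)
    -- normalized eigenfunction, unique up to ν-a.e. equality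
    ∧ ((∃ S : Θ → ℝ, Integrable S ν ∧ (∀ᵐ θ ∂ν, 0 < S θ)
          ∧ ((fun θ => ∫ θ', K θ' θ * S θ' ∂ν) =ᵐ[ν] S)
          ∧ Integrable (fun p : ℝ × Θ => lam p.1 p.2 * S p.2) (ageProd ν)
          ∧ 0 < ∫ p, lam p.1 p.2 * S p.2 ∂(ageProd ν)) →
        ∃ Sstar : Θ → ℝ,
          (Integrable Sstar ν ∧ (∀ᵐ θ ∂ν, 0 < Sstar θ)
            ∧ ((fun θ => ∫ θ', K θ' θ * Sstar θ' ∂ν) =ᵐ[ν] Sstar)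
            ∧ ∫ p, lam p.1 p.2 * Sstar p.2 ∂(ageProd ν) = 1)
          ∧ ∀ S' : Θ → ℝ,
              (Integrable S' ν ∧ (∀ᵐ θ ∂ν, 0 < S' θ)
                ∧ ((fun θ => ∫ θ', K θ' θ * S' θ' ∂ν) =ᵐ[ν] S')
                ∧ ∫ p, lam p.1 p.2 * S' p.2 ∂(ageProd ν) = 1) →
              S' =ᵐ[ν] Sstar) := by
  have hK : IsPositiveTransitionDensity ν K := ⟨hK_meas, hK_pos, hK_int, hK_bdd⟩
  obtain ⟨S, hS, hS_pos, hS_eq⟩ := exists_integrable_ae_pos_kernelOp_eq hK hK_sup_int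
  refine ⟨⟨kernelOpL1 hK, kernelOpL1_ae_eq hK,
      spectralRadius_kernelOpL1 hK hS (not_ae_eq_zero_of_ae_pos hS_pos) hS_eq⟩,
    ⟨S, hS, hS_pos, hS_eq⟩,
    fun _ _ h₁ h₂ _ hS₂ he₁ he₂ => exists_ae_eq_const_mul_of_kernelOp_eq hK h₁ h₂ hS₂ he₁ he₂,
    ?_⟩
  rintro ⟨S, hS, hS_pos, hS_eq, -, hI⟩
  set c := (∫ p, lam p.1 p.2 * S p.2 ∂(ageProd ν))⁻¹
  have hcS_eq : kernelOp ν K (c • S) =ᵐ[ν] c • S := by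
    rw [kernelOp_smul]
    exact hS_eq.const_smul c
  have hcS_norm : ∫ p, lam p.1 p.2 * (c • S) p.2 ∂(ageProd ν) = 1 :=
    (integral_prod_mul_of_ae_eq_const_mul lam (ae_of_all _ fun _ => rfl)).trans
      (inv_mul_cancel₀ hI.ne')
  have hcS_pos : ∀ᵐ θ ∂ν, 0 < (c • S) θ := hS_pos.mono fun θ h => mul_pos (inv_pos.2 hI) h
  refine ⟨c • S, ⟨hS.smul c, hcS_pos, hcS_eq, hcS_norm⟩, ?_⟩
  rintro S' ⟨hS', hS'_pos, hS'_eq, hS'_norm⟩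
  exact ae_eq_of_kernelOp_eq_of_integral_prod_eq hK lam hS' (hS.smul c)
    (not_ae_eq_zero_of_ae_pos hcS_pos) hS'_eq hcS_eq (hS'_norm.trans hcS_norm.symm)
    (hcS_norm ▸ one_ne_zero)

/-- Perron–Frobenius type result for the kernel operator
`T(B)(θ) = ∫_Θ K(θ',θ) B(θ') ν(dθ')`: its spectral radius is `1`, `1` is an eigenvalue with a
ν-a.e. positive eigenfunction in `L¹(ν)`, any two eigenfunctions for the eigenvalue `1` are
ν-a.e. proportional, and, provided `0 < ∫_{ℝ₊×Θ} λ(a,θ) S(θ) da ν(dθ) < ∞` for some ν-a.e.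
positive eigenfunction `S`, there is a (ν-a.e.) unique ν-a.e. positive eigenfunction `𝔖_*`
normalized by `∫_{ℝ₊×Θ} λ(a,θ) 𝔖_*(θ) da ν(dθ) = 1`. -/
theorem perron_frobenius {Θ : Type*} [MeasurableSpace Θ]
    (ν : Measure Θ) [IsProbabilityMeasure ν]
    (lamStar : ℝ) (hlamStar : 0 < lamStar)
    (lam : ℝ → Θ → ℝ)
    (hlam_meas : Measurable fun p : ℝ × Θ => lam p.1 p.2)
    (hlam_nonneg : ∀ a θ, 0 ≤ lam a θ)
    (hlam_bdd : ∀ a θ, lam a θ ≤ lamStar)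
    (K : Θ → Θ → ℝ)
    (hK_meas : Measurable fun p : Θ × Θ => K p.1 p.2)
    (hK_pos : ∀ θ θ', 0 < K θ θ')
    (hK_int : ∀ θ, ∫ θ', K θ θ' ∂ν = 1)
    (hK_bdd : ∀ θ, BddAbove (Set.range fun θ' => K θ' θ))
    (hK_sup_int : Integrable (fun θ => ⨆ θ', K θ' θ) ν) :
    -- the spectral radius of `T` equals 1
    (∃ T : Lp ℝ 1 ν →L[ℝ] Lp ℝ 1 ν,
      (∀ B : Lp ℝ 1 ν, (T B : Θ → ℝ) =ᵐ[ν] fun θ => ∫ θ', K θ' θ * B θ' ∂ν)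
      ∧ spectralRadius ℝ T = 1)
    -- `1` is an eigenvalue of `T` with a ν-a.e. positive eigenfunction in `L¹(ν)`
    ∧ (∃ S : Θ → ℝ, Integrable S ν ∧ (∀ᵐ θ ∂ν, 0 < S θ)
        ∧ (fun θ => ∫ θ', K θ' θ * S θ' ∂ν) =ᵐ[ν] S)
    -- any two eigenfunctions for the eigenvalue `1` are ν-a.e. proportional
    ∧ (∀ S₁ S₂ : Θ → ℝ, Integrable S₁ ν → Integrable S₂ ν →
        ¬ (S₁ =ᵐ[ν] 0) → ¬ (S₂ =ᵐ[ν] 0) →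
        ((fun θ => ∫ θ', K θ' θ * S₁ θ' ∂ν) =ᵐ[ν] S₁) →
        ((fun θ => ∫ θ', K θ' θ * S₂ θ' ∂ν) =ᵐ[ν] S₂) →
        ∃ c : ℝ, S₁ =ᵐ[ν] fun θ => c * S₂ θ)
    -- normalized eigenfunction, unique up to ν-a.e. equality
    ∧ ((∃ S : Θ → ℝ, Integrable S ν ∧ (∀ᵐ θ ∂ν, 0 < S θ)
          ∧ ((fun θ => ∫ θ', K θ' θ * S θ' ∂ν) =ᵐ[ν] S)
          ∧ Integrable (fun p : ℝ × Θ => lam p.1 p.2 * S p.2) (ageProd ν)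
          ∧ 0 < ∫ p, lam p.1 p.2 * S p.2 ∂(ageProd ν)) →
        ∃ Sstar : Θ → ℝ,
          (Integrable Sstar ν ∧ (∀ᵐ θ ∂ν, 0 < Sstar θ)
            ∧ ((fun θ => ∫ θ', K θ' θ * Sstar θ' ∂ν) =ᵐ[ν] Sstar)
            ∧ ∫ p, lam p.1 p.2 * Sstar p.2 ∂(ageProd ν) = 1)
          ∧ ∀ S' : Θ → ℝ,
              (Integrable S' ν ∧ (∀ᵐ θ ∂ν, 0 < S' θ)
                ∧ ((fun θ => ∫ θ', K θ' θ * S' θ' ∂ν) =ᵐ[ν] S')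
                ∧ ∫ p, lam p.1 p.2 * S' p.2 ∂(ageProd ν) = 1) →
              S' =ᵐ[ν] Sstar) :=
  perron_frobenius_general ν lam K hK_meas hK_pos hK_int hK_bdd hK_sup_int

end Stmt6
end

section
/- Let 0 < β ≤ α ≤ 1 and 0 < T_R < T_V be real numbers, and let γ(a) = α·1_{T_R < a < T_V} + β·1_{a ≥ T_V} (independent of θ). Then: (i) the function H satisfies H(x) = κ(x T_R + 1/α − (1/α − 1/β)·e^{−xα(T_V − T_R)}) for all x > 0, where κ = ∫_Θ 𝔖_*(θ) ν(dθ); (ii) H is nondecreasing on (0,∞) if and only if β T_V ≥ α(T_V − T_R); (iii) the inequality γ(a) ≥ (1/a)∫_0^a γ(s) ds holds for all a > 0 if and only if β T_V ≥ α(T_V − T_R). -/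
/-!
Since `γ` does not depend on `θ`, `H x = x κ ∫₀^∞ exp (-x Γ a) da` with `Γ a = ∫₀^a γ`. For the
one-shot profile `Γ a = α (a - T_R)⁺ + (β - α) (a - T_V)⁺` is piecewise linear, so the integral
splits into three elementary exponential integrals. The resulting `H` is affine plus a nonnegative
multiple of a decaying exponential, so its derivative increases and `H` is monotone on `(0, ∞)`
iff `H'(0) = κ (β T_V - α (T_V - T_R)) / β ≥ 0`. The averaging inequality `Γ a ≤ a γ a` is
automatic for `a < T_V`, and for `a ≥ T_V` it reads `α (T_V - T_R) + β (a - T_V) ≤ β a`.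
-/

open MeasureTheory Set Filter

namespace Stmt11

/-- `H(x) = x ∫_{ℝ₊×Θ} exp(−x ∫_0^a γ(s) ds) 𝔖_*(θ) da ν(dθ)` for a susceptibility curve `γ`
not depending on the trait `θ`. -/
noncomputable def H {Θ : Type*} [MeasurableSpace Θ] (ν : Measure Θ)
    (γ : ℝ → ℝ) (Sstar : Θ → ℝ) (x : ℝ) : ℝ :=
  x * ∫ a in Set.Ioi (0 : ℝ), ∫ θ,
        Real.exp (-(x * ∫ s in Set.Ioc (0 : ℝ) a, γ s)) * Sstar θ ∂ν

theorem integral_exp_neg_mul_sub {k : ℝ} (hk : k ≠ 0) (s t : ℝ) :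
    ∫ a in s..t, Real.exp (-(k * (a - s))) = (1 - Real.exp (-(k * (t - s)))) / k := by
  have hderiv : ∀ a ∈ uIcc s t, HasDerivAt (fun a => -Real.exp (-(k * (a - s))) / k)
      (Real.exp (-(k * (a - s)))) a := by
    intro a _
    refine ((((hasDerivAt_id' a).sub_const s).const_mul k).fun_neg.exp.fun_neg.div_const
      k).congr_deriv ?_
    field_simp
  rw [intervalIntegral.integral_eq_sub_of_hasDerivAt hderiv
    (Continuous.intervalIntegrable (by fun_prop) s t)]
  simp only [sub_self, mul_zero, neg_zero, Real.exp_zero]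
  ring

theorem exp_neg_mul_sub_eq_exp_mul_exp (k t : ℝ) :
    (fun a => Real.exp (-(k * (a - t)))) = fun a => Real.exp (k * t) * Real.exp (-k * a) := by
  ext a
  rw [← Real.exp_add]
  congr 1
  ring

theorem integrableOn_Ioi_exp_neg_mul_sub {k : ℝ} (hk : 0 < k) (t : ℝ) :
    IntegrableOn (fun a => Real.exp (-(k * (a - t)))) (Ioi t) := by
  rw [exp_neg_mul_sub_eq_exp_mul_exp]
  exact (integrableOn_exp_mul_Ioi (neg_neg_of_pos hk) t).const_mul _

theorem integral_Ioi_exp_neg_mul_sub {k : ℝ} (hk : 0 < k) (t : ℝ) :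
    ∫ a in Ioi t, Real.exp (-(k * (a - t))) = 1 / k := by
  rw [exp_neg_mul_sub_eq_exp_mul_exp, integral_const_mul,
    integral_exp_mul_Ioi (neg_neg_of_pos hk), neg_div_neg_eq, mul_div_assoc', ← Real.exp_add,
    neg_mul, add_neg_cancel, Real.exp_zero]

theorem integral_Ioi_exp_neg_piecewiseLinear {k₁ k₂ s t : ℝ} (hk₁ : k₁ ≠ 0) (hk₂ : 0 < k₂)
    (hs : 0 ≤ s) (hst : s ≤ t) :
    ∫ a in Ioi 0, Real.exp (-(k₁ * max (a - s) 0 + (k₂ - k₁) * max (a - t) 0)) =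
      s + (1 - Real.exp (-(k₁ * (t - s)))) / k₁ + Real.exp (-(k₁ * (t - s))) / k₂ := by
  set g := fun a => Real.exp (-(k₁ * max (a - s) 0 + (k₂ - k₁) * max (a - t) 0))
  have hg : Continuous g := by fun_prop
  have h_start : EqOn g (fun _ => 1) (uIcc 0 s) := by
    intro a ha
    rw [uIcc_of_le hs] at ha
    simp [g, max_eq_right (sub_nonpos.2 ha.2), max_eq_right (sub_nonpos.2 (ha.2.trans hst))]
  have h_mid : EqOn g (fun a => Real.exp (-(k₁ * (a - s)))) (uIcc s t) := by
    intro a ha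
    rw [uIcc_of_le hst] at ha
    simp [g, max_eq_left (sub_nonneg.2 ha.1), max_eq_right (sub_nonpos.2 ha.2)]
  have h_tail : EqOn g (fun a => Real.exp (-(k₁ * (t - s))) * Real.exp (-(k₂ * (a - t))))
      (Ioi t) := by
    intro a ha
    have hta : t ≤ a := le_of_lt ha
    simp only [g, max_eq_left (sub_nonneg.2 (hst.trans hta)), max_eq_left (sub_nonneg.2 hta),
      ← Real.exp_add]
    congr 1
    ring
  have h_tail_int : IntegrableOn g (Ioi t) :=
    IntegrableOn.congr_fun ((integrableOn_Ioi_exp_neg_mul_sub hk₂ t).const_mul _) h_tail.symm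
      measurableSet_Ioi
  rw [← intervalIntegral.integral_interval_add_Ioi' (hg.intervalIntegrable 0 t) h_tail_int,
    ← intervalIntegral.integral_add_adjacent_intervals (hg.intervalIntegrable 0 s)
      (hg.intervalIntegrable s t),
    intervalIntegral.integral_congr h_start, intervalIntegral.integral_congr h_mid,
    setIntegral_congr_fun measurableSet_Ioi h_tail, integral_const_mul,
    integral_Ioi_exp_neg_mul_sub hk₂, integral_exp_neg_mul_sub hk₁,
    intervalIntegral.integral_const, smul_eq_mul, mul_one, sub_zero]
  ring

theorem accPt_Ioi (x : ℝ) : AccPt x (𝓟 (Ioi x)) := by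
  rw [accPt_principal_iff_nhdsWithin, sdiff_singleton_eq_self self_notMem_Ioi]
  infer_instance

theorem monotoneOn_Ioi_zero_affine_add_mul_exp_iff {p q r c : ℝ} (hq : 0 ≤ q) :
    MonotoneOn (fun x => p * x + r + q * Real.exp (-(c * x))) (Ioi 0) ↔ c * q ≤ p := by
  have hderiv : ∀ x, HasDerivAt (fun x => p * x + r + q * Real.exp (-(c * x)))
      (p - c * q * Real.exp (-(c * x))) x := by
    intro x
    refine ((((hasDerivAt_id' x).const_mul p).add_const r).fun_add
      (((hasDerivAt_id' x).const_mul c).fun_neg.exp.const_mul q)).congr_deriv ?_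
    ring
  constructor
  · intro hmono
    -- `0 ∉ Ioi 0`, but it is an accumulation point, which is all the one-sided test needs.
    simpa using (hderiv 0).hasDerivWithinAt.nonneg_of_monotoneOn (accPt_Ioi 0) hmono
  · intro hcq
    refine monotoneOn_of_deriv_nonneg (convex_Ioi 0)
      (fun x _ => (hderiv x).continuousAt.continuousWithinAt)
      (fun x _ => (hderiv x).differentiableAt.differentiableWithinAt) fun x hx => ?_
    rw [interior_Ioi] at hx
    rw [(hderiv x).deriv]
    have hexp : c * Real.exp (-(c * x)) ≤ c := by
      rcases le_total 0 c with hc | hc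
      · have : Real.exp (-(c * x)) ≤ 1 := Real.exp_le_one_iff.2 (by nlinarith [mem_Ioi.1 hx])
        nlinarith
      · have : 1 ≤ Real.exp (-(c * x)) := Real.one_le_exp_iff.2 (by nlinarith [mem_Ioi.1 hx])
        nlinarith
    nlinarith

theorem integral_pos_of_ae_pos {X : Type*} [MeasurableSpace X] {μ : Measure X} [NeZero μ]
    {f : X → ℝ} (hf : Integrable f μ) (hpos : ∀ᵐ x ∂μ, 0 < f x) : 0 < ∫ x, f x ∂μ := by
  have hsupp : Function.support f ∈ ae μ := hpos.mono fun _ h => h.ne'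
  rw [integral_pos_iff_support_of_nonneg_ae (hpos.mono fun _ h => h.le) hf,
    measure_congr (ae_eq_univ.2 (mem_ae_iff.1 hsupp))]
  exact Measure.measure_univ_pos.2 (NeZero.ne μ)

theorem setIntegral_Ioc_indicator_Ioi {u t : ℝ} (hut : u ≤ t) (a c : ℝ) :
    ∫ s in Ioc u a, (Ioi t).indicator (fun _ => c) s = max (a - t) 0 * c := by
  rw [setIntegral_indicator measurableSet_Ioi, setIntegral_const, Ioc_inter_Ioi,
    max_eq_right hut, Real.volume_real_Ioc, smul_eq_mul]

theorem setIntegral_Ioc_indicator_Ici {u t : ℝ} (hut : u < t) (a c : ℝ) :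
    ∫ s in Ioc u a, (Ici t).indicator (fun _ => c) s = max (a - t) 0 * c := by
  have hinter : Ioc u a ∩ Ici t = Icc t a := by
    ext s
    simp only [mem_inter_iff, mem_Ioc, mem_Ici, mem_Icc]
    constructor
    · rintro ⟨⟨-, hsa⟩, hts⟩; exact ⟨hts, hsa⟩
    · rintro ⟨hts, hsa⟩; exact ⟨⟨hut.trans_le hts, hsa⟩, hts⟩
  rw [setIntegral_indicator measurableSet_Ici, setIntegral_const, hinter,
    Real.volume_real_Icc, smul_eq_mul]

theorem H_eq_mul_integral_exp {Θ : Type*} [MeasurableSpace Θ] (ν : Measure Θ)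
    (γ : ℝ → ℝ) (Sstar : Θ → ℝ) (x : ℝ) :
    H ν γ Sstar x =
      x * (∫ θ, Sstar θ ∂ν) * ∫ a in Ioi 0, Real.exp (-(x * ∫ s in Ioc 0 a, γ s)) := by
  simp only [H, integral_const_mul, integral_mul_const]
  ring

noncomputable def oneShotSusceptibility (α β T_R T_V : ℝ) (a : ℝ) : ℝ :=
  if T_R < a ∧ a < T_V then α else if T_V ≤ a then β else 0

section OneShot

variable {α β T_R T_V : ℝ}

theorem oneShotSusceptibility_of_le (hTRV : T_R < T_V) {a : ℝ} (ha : a ≤ T_R) :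
    oneShotSusceptibility α β T_R T_V a = 0 := by
  grind [oneShotSusceptibility]

theorem oneShotSusceptibility_of_mem_Ioo {a : ℝ} (ha : a ∈ Ioo T_R T_V) :
    oneShotSusceptibility α β T_R T_V a = α :=
  if_pos ha

theorem oneShotSusceptibility_of_ge {a : ℝ} (ha : T_V ≤ a) :
    oneShotSusceptibility α β T_R T_V a = β := by
  grind [oneShotSusceptibility]

theorem oneShotSusceptibility_eq_indicator (hTRV : T_R < T_V) :
    oneShotSusceptibility α β T_R T_V =
      (Ioi T_R).indicator (fun _ => α) + (Ici T_V).indicator (fun _ => β - α) := by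
  ext a
  simp only [oneShotSusceptibility, Pi.add_apply, indicator_apply, mem_Ioi, mem_Ici]
  split_ifs <;> grind

theorem integral_oneShotSusceptibility (hTR : 0 ≤ T_R) (hTRV : T_R < T_V) (a : ℝ) :
    ∫ s in Ioc 0 a, oneShotSusceptibility α β T_R T_V s =
      α * max (a - T_R) 0 + (β - α) * max (a - T_V) 0 := by
  have hint : ∀ (S : Set ℝ) (c : ℝ), MeasurableSet S →
      IntegrableOn (S.indicator fun _ => c) (Ioc 0 a) := fun S c hS =>
    (integrableOn_const measure_Ioc_lt_top.ne).indicator hS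
  rw [oneShotSusceptibility_eq_indicator hTRV]
  simp only [Pi.add_apply]
  rw [integral_add (hint _ _ measurableSet_Ioi) (hint _ _ measurableSet_Ici),
    setIntegral_Ioc_indicator_Ioi hTR, setIntegral_Ioc_indicator_Ici (hTR.trans_lt hTRV)]
  ring

theorem H_oneShotSusceptibility {Θ : Type*} [MeasurableSpace Θ] (ν : Measure Θ)
    (Sstar : Θ → ℝ) (hα : α ≠ 0) (hβ : 0 < β) (hTR : 0 ≤ T_R) (hTRV : T_R < T_V)
    {x : ℝ} (hx : 0 < x) :
    H ν (oneShotSusceptibility α β T_R T_V) Sstar x = (∫ θ, Sstar θ ∂ν) *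
      (x * T_R + 1 / α - (1 / α - 1 / β) * Real.exp (-(x * α * (T_V - T_R)))) := by
  have hslopes : ∀ a, x * (α * max (a - T_R) 0 + (β - α) * max (a - T_V) 0) =
      x * α * max (a - T_R) 0 + (x * β - x * α) * max (a - T_V) 0 := fun a => by ring
  simp_rw [H_eq_mul_integral_exp, integral_oneShotSusceptibility hTR hTRV, hslopes]
  rw [integral_Ioi_exp_neg_piecewiseLinear (mul_ne_zero hx.ne' hα) (mul_pos hx hβ) hTR hTRV.le]
  field_simp
  ring

theorem monotoneOn_H_oneShotSusceptibility_iff {Θ : Type*} [MeasurableSpace Θ]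
    (ν : Measure Θ) (Sstar : Θ → ℝ) (hκ : 0 < ∫ θ, Sstar θ ∂ν) (hβ : 0 < β) (hβα : β ≤ α)
    (hTR : 0 ≤ T_R) (hTRV : T_R < T_V) :
    MonotoneOn (H ν (oneShotSusceptibility α β T_R T_V) Sstar) (Ioi 0) ↔
      α * (T_V - T_R) ≤ β * T_V := by
  set κ := ∫ θ, Sstar θ ∂ν
  have hα : 0 < α := hβ.trans_le hβα
  have hH : EqOn (H ν (oneShotSusceptibility α β T_R T_V) Sstar)
      (fun x => κ * T_R * x + κ / α + κ * (1 / β - 1 / α) * Real.exp (-(α * (T_V - T_R) * x)))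
      (Ioi 0) := fun x hx => by
    rw [H_oneShotSusceptibility ν Sstar hα.ne' hβ hTR hTRV hx,
      show x * α * (T_V - T_R) = α * (T_V - T_R) * x by ring]
    ring
  have hq : 0 ≤ κ * (1 / β - 1 / α) :=
    mul_nonneg hκ.le (sub_nonneg.2 (one_div_le_one_div_of_le hβ hβα))
  rw [hH.congr_monotoneOn, monotoneOn_Ioi_zero_affine_add_mul_exp_iff hq]
  have hrate :
      α * (T_V - T_R) * (κ * (1 / β - 1 / α)) = κ * ((α - β) * (T_V - T_R) / β) := by
    field_simp
  rw [hrate, mul_le_mul_iff_right₀ hκ, div_le_iff₀ hβ]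
  constructor <;> intro h <;> linarith

theorem average_le_oneShotSusceptibility_iff (hα : 0 ≤ α) (hTR : 0 ≤ T_R) (hTRV : T_R < T_V) :
    (∀ a : ℝ, 0 < a →
        (∫ s in Ioc 0 a, oneShotSusceptibility α β T_R T_V s) / a ≤
          oneShotSusceptibility α β T_R T_V a) ↔
      α * (T_V - T_R) ≤ β * T_V := by
  simp only [integral_oneShotSusceptibility hTR hTRV]
  constructor
  · intro h
    have hTV : 0 < T_V := hTR.trans_lt hTRV
    have := h T_V hTV
    rw [oneShotSusceptibility_of_ge le_rfl, div_le_iff₀ hTV, sub_self, max_self,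
      max_eq_left (sub_nonneg.2 hTRV.le)] at this
    linarith
  · intro hcond a ha
    rw [div_le_iff₀ ha]
    rcases le_or_gt a T_R with haR | haR
    · rw [oneShotSusceptibility_of_le hTRV haR, max_eq_right (sub_nonpos.2 haR),
        max_eq_right (sub_nonpos.2 (haR.trans hTRV.le))]
      simp
    rcases lt_or_ge a T_V with haV | haV
    · rw [oneShotSusceptibility_of_mem_Ioo ⟨haR, haV⟩, max_eq_left (sub_nonneg.2 haR.le),
        max_eq_right (sub_nonpos.2 haV.le)]
      nlinarith
    · rw [oneShotSusceptibility_of_ge haV, max_eq_left (sub_nonneg.2 haR.le),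
        max_eq_left (sub_nonneg.2 haV)]
      linarith

end OneShot

theorem one_shot_vaccination_general {Θ : Type*} [MeasurableSpace Θ]
    (ν : Measure Θ) [IsProbabilityMeasure ν]
    (Sstar : Θ → ℝ) (hSstar_int : Integrable Sstar ν)
    (hSstar_pos : ∀ᵐ θ ∂ν, 0 < Sstar θ)
    (α β T_R T_V : ℝ)
    (hβ : 0 < β) (hβα : β ≤ α)
    (hTR : 0 < T_R) (hTRV : T_R < T_V)
    (γ : ℝ → ℝ)
    (hγ : ∀ a : ℝ, γ a = if T_R < a ∧ a < T_V then α else if T_V ≤ a then β else 0) :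
    (∀ x : ℝ, 0 < x →
        H ν γ Sstar x = (∫ θ, Sstar θ ∂ν) *
          (x * T_R + 1 / α - (1 / α - 1 / β) * Real.exp (-(x * α * (T_V - T_R)))))
    ∧ (MonotoneOn (H ν γ Sstar) (Set.Ioi (0 : ℝ)) ↔ α * (T_V - T_R) ≤ β * T_V)
    ∧ ((∀ a : ℝ, 0 < a → (∫ s in Set.Ioc (0 : ℝ) a, γ s) / a ≤ γ a)
        ↔ α * (T_V - T_R) ≤ β * T_V) := by
  obtain rfl : γ = oneShotSusceptibility α β T_R T_V := funext hγ
  have hα : 0 < α := hβ.trans_le hβα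
  exact ⟨fun x hx => H_oneShotSusceptibility ν Sstar hα.ne' hβ hTR.le hTRV hx,
    monotoneOn_H_oneShotSusceptibility_iff ν Sstar (integral_pos_of_ae_pos hSstar_int hSstar_pos)
      hβ hβα hTR.le hTRV,
    average_le_oneShotSusceptibility_iff hα.le hTR.le hTRV⟩

/-- Explicit computation of `H` for the one-shot-vaccination susceptibility curve
`γ(a) = α 1_{T_R < a < T_V} + β 1_{a ≥ T_V}`, together with the characterization of the
monotonicity of `H` and of the averaging inequality by the condition `β T_V ≥ α (T_V − T_R)`. -/
theorem one_shot_vaccination {Θ : Type*} [MeasurableSpace Θ]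
    (ν : Measure Θ) [IsProbabilityMeasure ν]
    (Sstar : Θ → ℝ) (hSstar_int : Integrable Sstar ν)
    (hSstar_pos : ∀ᵐ θ ∂ν, 0 < Sstar θ)
    (α β T_R T_V : ℝ)
    (hβ : 0 < β) (hβα : β ≤ α) (hα : α ≤ 1)
    (hTR : 0 < T_R) (hTRV : T_R < T_V)
    (γ : ℝ → ℝ)
    (hγ : ∀ a : ℝ, γ a = if T_R < a ∧ a < T_V then α else if T_V ≤ a then β else 0) :
    (∀ x : ℝ, 0 < x →
        H ν γ Sstar x = (∫ θ, Sstar θ ∂ν) *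
          (x * T_R + 1 / α - (1 / α - 1 / β) * Real.exp (-(x * α * (T_V - T_R)))))
    ∧ (MonotoneOn (H ν γ Sstar) (Set.Ioi (0 : ℝ)) ↔ α * (T_V - T_R) ≤ β * T_V)
    ∧ ((∀ a : ℝ, 0 < a → (∫ s in Set.Ioc (0 : ℝ) a, γ s) / a ≤ γ a)
        ↔ α * (T_V - T_R) ≤ β * T_V) :=
  one_shot_vaccination_general ν Sstar hSstar_int hSstar_pos α β T_R T_V hβ hβα hTR hTRV γ hγ

end Stmt11
end

section
/- For every t ≥ 0 and every φ ∈ L¹(da ⊗ ν), the function T¹_*(t)(φ)(a,θ) = 1_{a ≥ t}·φ(a−t,θ)·exp(−𝔉_* ∫_0^t γ(a−t+r,θ) dr) satisfies ‖T¹_*(t)(φ)‖_{L¹(da⊗ν)} ≤ e^{𝔉_* σ a_*}·e^{−𝔉_* σ t}·‖φ‖_{L¹(da⊗ν)}. -/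
open MeasureTheory Set

namespace Stmt13

/-- The measure `da ⊗ ν` on `ℝ₊ × Θ`. -/
noncomputable def ageProd {Θ : Type*} [MeasurableSpace Θ] (ν : Measure Θ) :
    Measure (ℝ × Θ) :=
  (volume.restrict (Set.Ioi (0 : ℝ))).prod ν

/-!
Along characteristics, `T¹_*(t)` transports `φ` by `t` in age and damps it by
`exp (-𝔉_* ∫₀ᵗ γ)`. Since `0 ≤ γ` everywhere and `σ ≤ γ` beyond age `a_*`, the damping exponent
is at least `σ (t - a_*)`, whatever the starting age. The transport `(a, θ) ↦ (a + t, θ)` carries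
`da ⊗ ν` onto its restriction to `{a ≥ t}`, so it does not change the `L¹` norm.
-/

lemma mul_sub_le_setIntegral_Ioc {f : ℝ → ℝ} {σ a b c : ℝ} (hf : IntegrableOn f (Ioc a b))
    (hf_nonneg : ∀ r, 0 ≤ f r) (hσ : 0 ≤ σ) (hac : a ≤ c) (hσf : ∀ r, c < r → σ ≤ f r) :
    σ * (b - c) ≤ ∫ r in Ioc a b, f r := by
  rcases le_or_gt b c with hbc | hcb
  · have hint_nonneg : 0 ≤ ∫ r in Ioc a b, f r :=
      setIntegral_nonneg measurableSet_Ioc fun r _ ↦ hf_nonneg r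
    nlinarith
  calc σ * (b - c) = ∫ _ in Ioc c b, σ := by
        rw [setIntegral_const, Real.volume_real_Ioc_of_le hcb.le, smul_eq_mul, mul_comm]
    _ ≤ ∫ r in Ioc c b, f r :=
        setIntegral_mono_on (integrableOn_const measure_Ioc_lt_top.ne)
          (hf.mono_set (Ioc_subset_Ioc_left hac)) measurableSet_Ioc fun r hr ↦ hσf r hr.1
    _ ≤ ∫ r in Ioc a b, f r :=
        setIntegral_mono_set hf (ae_of_all _ fun r ↦ hf_nonneg r)
          (Ioc_subset_Ioc_left hac).eventuallyLE

section Absorption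

variable {Θ : Type*} [MeasurableSpace Θ] {γ : ℝ → Θ → ℝ} {σ astar : ℝ}

lemma integrableOn_absorption (hγ_meas : Measurable fun p : ℝ × Θ => γ p.1 p.2)
    (hγ_nonneg : ∀ a θ, 0 ≤ γ a θ) (hγ_le_one : ∀ a θ, γ a θ ≤ 1) (θ : Θ) (s t : ℝ) :
    IntegrableOn (fun r ↦ γ (s + r) θ) (Ioc 0 t) := by
  refine Measure.integrableOn_of_bounded (M := 1) measure_Ioc_lt_top.ne ?_ (ae_of_all _ fun r ↦ ?_)
  · exact (hγ_meas.comp ((measurable_const_add s).prodMk measurable_const)).aestronglyMeasurable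
  · rw [Real.norm_of_nonneg (hγ_nonneg _ _)]
    exact hγ_le_one _ _

lemma exp_neg_absorption_le (hγ_meas : Measurable fun p : ℝ × Θ => γ p.1 p.2)
    (hγ_nonneg : ∀ a θ, 0 ≤ γ a θ) (hγ_le_one : ∀ a θ, γ a θ ≤ 1)
    (hσ : 0 ≤ σ) (hastar : 0 ≤ astar) (hγ_lower : ∀ a θ, astar < a → σ ≤ γ a θ)
    {F : ℝ} (hF : 0 ≤ F) (θ : Θ) {s : ℝ} (hs : 0 ≤ s) (t : ℝ) :
    Real.exp (-(F * ∫ r in Ioc (0 : ℝ) t, γ (s + r) θ))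
      ≤ Real.exp (F * σ * astar) * Real.exp (-(F * σ * t)) := by
  have hbound : σ * (t - astar) ≤ ∫ r in Ioc (0 : ℝ) t, γ (s + r) θ :=
    mul_sub_le_setIntegral_Ioc (integrableOn_absorption hγ_meas hγ_nonneg hγ_le_one θ s t)
      (fun r ↦ hγ_nonneg _ _) hσ hastar fun r hr ↦ hγ_lower _ _ (by linarith)
  rw [← Real.exp_add, Real.exp_le_exp]
  nlinarith [mul_le_mul_of_nonneg_left hbound hF]

end Absorption

section Transport

variable {Θ : Type*} {t : ℝ}

lemma ite_shift_eq_indicator (g : ℝ × Θ → ℝ) :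
    (fun p : ℝ × Θ ↦ if t ≤ p.1 then g (p.1 - t, p.2) else 0)
      = (Ici t ×ˢ univ).indicator fun p ↦ g (p.1 - t, p.2) := by
  ext p
  simp [indicator_apply]

variable [MeasurableSpace Θ] (ν : Measure Θ) [SFinite ν]

lemma measurePreserving_ageProd_shift (ht : 0 ≤ t) :
    MeasurePreserving (fun p : ℝ × Θ ↦ (p.1 + t, p.2)) (ageProd ν)
      ((ageProd ν).restrict (Ici t ×ˢ univ)) := by
  have hshift : MeasurePreserving (· + t) (volume.restrict (Ioi 0)) (volume.restrict (Ioi t)) := by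
    simpa using
      (measurePreserving_add_right volume t).restrict_preimage (measurableSet_Ioi (a := t))
  have hrestrict : (volume.restrict (Ioi (0 : ℝ))).restrict (Ici t) = volume.restrict (Ioi t) := by
    rw [Measure.restrict_restrict measurableSet_Ici]
    refine Measure.restrict_congr_set ?_
    have : Ioi t ∩ Ioi 0 = Ioi t := by rw [Ioi_inter_Ioi, max_eq_left ht]
    exact this ▸ Ioi_ae_eq_Ici.symm.inter (ae_eq_refl _)
  rw [ageProd, ← Measure.prod_restrict, Measure.restrict_univ, hrestrict]
  exact hshift.prod (MeasurePreserving.id ν)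

lemma integral_ageProd_shift (ht : 0 ≤ t) (g : ℝ × Θ → ℝ) :
    ∫ p, (if t ≤ p.1 then g (p.1 - t, p.2) else 0) ∂(ageProd ν) = ∫ p, g p ∂(ageProd ν) := by
  rw [ite_shift_eq_indicator, integral_indicator (measurableSet_Ici.prod .univ),
    ← (measurePreserving_ageProd_shift ν ht).integral_comp
      ((measurableEmbedding_addRight t).prodMap .id)]
  simp

lemma integrable_ageProd_shift (ht : 0 ≤ t) {g : ℝ × Θ → ℝ} (hg : Integrable g (ageProd ν)) :
    Integrable (fun p ↦ if t ≤ p.1 then g (p.1 - t, p.2) else 0) (ageProd ν) := by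
  rw [ite_shift_eq_indicator, integrable_indicator_iff (measurableSet_Ici.prod .univ), IntegrableOn,
    ← (measurePreserving_ageProd_shift ν ht).integrable_comp_emb
      ((measurableEmbedding_addRight t).prodMap .id)]
  simpa [Function.comp_def] using hg

end Transport

theorem T1_decay_general {Θ : Type*} [MeasurableSpace Θ]
    (ν : Measure Θ) [IsProbabilityMeasure ν]
    (γ : ℝ → Θ → ℝ)
    (hγ_meas : Measurable fun p : ℝ × Θ => γ p.1 p.2)
    (hγ_nonneg : ∀ a θ, 0 ≤ γ a θ)
    (hγ_le_one : ∀ a θ, γ a θ ≤ 1)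
    (σ astar : ℝ) (hσ_pos : 0 < σ) (hastar : 0 < astar)
    (hγ_lower : ∀ a θ, astar < a → σ ≤ γ a θ)
    (Fstar : ℝ) (hFstar : 0 < Fstar)
    (t : ℝ) (ht : 0 ≤ t)
    (φ : ℝ × Θ → ℝ) (hφ : Integrable φ (ageProd ν)) :
    (∫ p, |if t ≤ p.1 then
        φ (p.1 - t, p.2) * Real.exp (-(Fstar * ∫ r in Set.Ioc (0 : ℝ) t, γ (p.1 - t + r) p.2))
      else 0| ∂(ageProd ν))
    ≤ Real.exp (Fstar * σ * astar) * Real.exp (-(Fstar * σ * t)) *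
        ∫ p, |φ p| ∂(ageProd ν) := by
  set C := Real.exp (Fstar * σ * astar) * Real.exp (-(Fstar * σ * t))
  have hpointwise : ∀ p : ℝ × Θ,
      |if t ≤ p.1 then
        φ (p.1 - t, p.2) * Real.exp (-(Fstar * ∫ r in Set.Ioc (0 : ℝ) t, γ (p.1 - t + r) p.2))
      else 0| ≤ C * if t ≤ p.1 then |φ (p.1 - t, p.2)| else 0 := by
    intro p
    split_ifs with h
    · rw [abs_mul, Real.abs_exp, mul_comm C]
      exact mul_le_mul_of_nonneg_left (exp_neg_absorption_le hγ_meas hγ_nonneg hγ_le_one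
        hσ_pos.le hastar.le hγ_lower hFstar.le p.2 (sub_nonneg.2 h) t) (abs_nonneg _)
    · simp
  calc _ ≤ ∫ p, C * (if t ≤ p.1 then |φ (p.1 - t, p.2)| else 0) ∂(ageProd ν) :=
        integral_mono_of_nonneg (ae_of_all _ fun p ↦ abs_nonneg _)
          ((integrable_ageProd_shift ν ht hφ.abs).const_mul C) (ae_of_all _ hpointwise)
    _ = C * ∫ p, |φ p| ∂(ageProd ν) := by
        rw [integral_const_mul, integral_ageProd_shift ν ht fun p ↦ |φ p|]

/-- Exponential decay of the `L¹` norm of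
`T¹_*(t)(φ)(a,θ) = 1_{a ≥ t} φ(a−t,θ) exp(−𝔉_* ∫_0^t γ(a−t+r,θ) dr)`:
`‖T¹_*(t)(φ)‖ ≤ e^{𝔉_* σ a_*} e^{−𝔉_* σ t} ‖φ‖`. -/
theorem T1_decay {Θ : Type*} [MeasurableSpace Θ]
    (ν : Measure Θ) [IsProbabilityMeasure ν]
    (γ : ℝ → Θ → ℝ)
    (hγ_meas : Measurable fun p : ℝ × Θ => γ p.1 p.2)
    (hγ_nonneg : ∀ a θ, 0 ≤ γ a θ)
    (hγ_le_one : ∀ a θ, γ a θ ≤ 1)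
    (σ astar : ℝ) (hσ_pos : 0 < σ) (hσ_le : σ ≤ 1) (hastar : 0 < astar)
    (hγ_lower : ∀ a θ, astar < a → σ ≤ γ a θ)
    (Fstar : ℝ) (hFstar : 0 < Fstar)
    (t : ℝ) (ht : 0 ≤ t)
    (φ : ℝ × Θ → ℝ) (hφ : Integrable φ (ageProd ν)) :
    (∫ p, |if t ≤ p.1 then
        φ (p.1 - t, p.2) * Real.exp (-(Fstar * ∫ r in Set.Ioc (0 : ℝ) t, γ (p.1 - t + r) p.2))
      else 0| ∂(ageProd ν))
    ≤ Real.exp (Fstar * σ * astar) * Real.exp (-(Fstar * σ * t)) *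
        ∫ p, |φ p| ∂(ageProd ν) :=
  T1_decay_general ν γ hγ_meas hγ_nonneg hγ_le_one σ astar hσ_pos hastar hγ_lower Fstar hFstar t ht
    φ hφ

end Stmt13
end

section
/- Let ρ > 0, a_* > 0, λ_* > 0, and set R₀ = λ_*(1 − e^{−ρ a_*})/ρ. Assume R₀ > 1 and λ_* ≤ 2ρ e^{ρ a_*}. Then for all x ≥ 0 and y ∈ ℝ: 1 + (R₀ − 2)·(λ_*/R₀)·∫_0^{a_*} e^{−(x+ρ)a} cos(ya) da ≠ 0. -/
open MeasureTheory Set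

namespace Stmt16

/-!
Put `s = x + ρ` and `z = -s + iy`; the integral is `Re ((exp (z a_*) - 1) / z)`.
If `R₀ ≤ 2`, the integral is bounded in absolute value by `∫₀^{a_*} e^{-ρa} da = R₀ / λ_*`,
so the expression is at least `R₀ - 1 > 0`.
If `R₀ > 2`, the coefficient `K = (R₀ - 2) λ_* / R₀` lies in `(0, λ_*)`, and the lower bound
`s / |z|² - e^{-s a_*} / |z|` for the integral bounds the expression below by
`(|z|² - K e^{-s a_*} |z| + K s) / |z|²`, a quadratic in `|z|` whose discriminant
`K (K e^{-2 s a_*} - 4 s)` is negative because `λ_* ≤ 2ρ e^{ρ a_*}`.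
-/

theorem integral_exp_mul_cos_eq {z : ℂ} (hz : z ≠ 0) (b : ℝ) :
    ∫ a in (0 : ℝ)..b, Real.exp (z.re * a) * Real.cos (z.im * a) =
      ((Complex.exp (z * b) - 1) / z).re := by
  have hre : ∀ a : ℝ, Real.exp (z.re * a) * Real.cos (z.im * a) = (Complex.exp (z * a)).re := by
    intro a
    simp [Complex.exp_re]
  simp_rw [hre]
  calc ∫ a in (0 : ℝ)..b, (Complex.exp (z * a)).re
      = (∫ a in (0 : ℝ)..b, Complex.exp (z * a)).re :=
        Complex.reCLM.intervalIntegral_comp_comm (Continuous.intervalIntegrable (by fun_prop) _ _)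
    _ = ((Complex.exp (z * b) - 1) / z).re := by simp [integral_exp_mul_complex hz]

theorem integral_exp_neg_mul {ρ : ℝ} (hρ : ρ ≠ 0) (b : ℝ) :
    ∫ a in (0 : ℝ)..b, Real.exp (-ρ * a) = (1 - Real.exp (-ρ * b)) / ρ := by
  rw [intervalIntegral.integral_comp_mul_left (fun a => Real.exp a) (neg_ne_zero.2 hρ)]
  simp only [inv_neg, mul_zero, neg_mul, integral_exp, Real.exp_zero, smul_eq_mul]
  field_simp
  ring

theorem abs_integral_exp_mul_cos_le {ρ : ℝ} {z : ℂ} (hz : z.re ≤ -ρ) {b : ℝ}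
    (hb : 0 ≤ b) :
    |∫ a in (0 : ℝ)..b, Real.exp (z.re * a) * Real.cos (z.im * a)| ≤
      ∫ a in (0 : ℝ)..b, Real.exp (-ρ * a) := by
  rw [← Real.norm_eq_abs]
  apply intervalIntegral.norm_integral_le_of_norm_le hb _
    ((by fun_prop : Continuous fun a : ℝ => Real.exp (-ρ * a)).intervalIntegrable _ _)
  refine Filter.Eventually.of_forall fun a ha => ?_
  calc ‖Real.exp (z.re * a) * Real.cos (z.im * a)‖
      = Real.exp (z.re * a) * |Real.cos (z.im * a)| := by
        rw [Real.norm_eq_abs, abs_mul, abs_of_pos (Real.exp_pos _)]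
    _ ≤ Real.exp (-ρ * a) * 1 := by
        gcongr
        · exact ha.1.le
        · exact Real.abs_cos_le_one _
    _ = Real.exp (-ρ * a) := mul_one _

theorem le_integral_exp_mul_cos {z : ℂ} (hz : z ≠ 0) (b : ℝ) :
    -z.re / ‖z‖ ^ 2 - Real.exp (z.re * b) / ‖z‖ ≤
      ∫ a in (0 : ℝ)..b, Real.exp (z.re * a) * Real.cos (z.im * a) := by
  have hnorm : ‖Complex.exp (z * b) / z‖ = Real.exp (z.re * b) / ‖z‖ := by
    rw [norm_div, Complex.norm_exp]; simp
  have hinv : (1 / z).re = z.re / ‖z‖ ^ 2 := by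
    rw [one_div, Complex.inv_re, Complex.normSq_eq_norm_sq]
  rw [integral_exp_mul_cos_eq hz, neg_div, sub_div, Complex.sub_re, hinv]
  linarith [neg_abs_le (Complex.exp (z * b) / z).re,
    hnorm ▸ Complex.abs_re_le_norm (Complex.exp (z * b) / z)]

theorem one_add_mul_sub_div_pos {K r s e : ℝ} (hK : 0 < K) (hr : 0 < r) (h : K * e ^ 2 < 4 * s) :
    0 < 1 + K * (s / r ^ 2 - e / r) := by
  have hnum : 0 < r ^ 2 - K * e * r + K * s := by
    nlinarith [sq_nonneg (2 * r - K * e), mul_lt_mul_of_pos_left h hK]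
  have : 1 + K * (s / r ^ 2 - e / r) = (r ^ 2 - K * e * r + K * s) / r ^ 2 := by
    field_simp; ring
  rw [this]; positivity

theorem mul_exp_neg_mul_sq_lt {ρ s b K : ℝ} (hρ : 0 < ρ) (hρs : ρ ≤ s) (hb : 0 ≤ b)
    (hK : K ≤ 2 * ρ * Real.exp (ρ * b)) : K * Real.exp (-s * b) ^ 2 < 4 * s := by
  have hexp : Real.exp (-s * b) ≤ Real.exp (-ρ * b) := by gcongr
  calc K * Real.exp (-s * b) ^ 2 ≤ 2 * ρ * Real.exp (ρ * b) * Real.exp (-ρ * b) ^ 2 := by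
        gcongr
    _ = 2 * ρ * Real.exp (-ρ * b) := by
        have : Real.exp (ρ * b) * Real.exp (-ρ * b) = 1 := by
          rw [← Real.exp_add, neg_mul, add_neg_cancel, Real.exp_zero]
        linear_combination 2 * ρ * Real.exp (-ρ * b) * this
    _ ≤ 2 * ρ := by
        have : Real.exp (-ρ * b) ≤ 1 := Real.exp_le_one_iff.2 (by nlinarith)
        nlinarith
    _ < 4 * s := by linarith

/-- Key real-analytic estimate in the proof of local stability for the SIS-type model:
for `R₀ = λ_*(1 − e^{−ρ a_*})/ρ > 1` and `λ_* ≤ 2ρ e^{ρ a_*}`, the quantity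
`1 + (R₀ − 2)(λ_*/R₀) ∫_0^{a_*} e^{−(x+ρ)a} cos(ya) da` never vanishes for `x ≥ 0`, `y ∈ ℝ`. -/
theorem no_root {ρ astar lamStar R0 : ℝ}
    (hρ : 0 < ρ) (hastar : 0 < astar) (hlamStar : 0 < lamStar)
    (hR0 : R0 = lamStar * (1 - Real.exp (-ρ * astar)) / ρ)
    (hR0_gt : 1 < R0)
    (hlam_le : lamStar ≤ 2 * ρ * Real.exp (ρ * astar)) :
    ∀ x : ℝ, 0 ≤ x → ∀ y : ℝ,
      1 + (R0 - 2) * (lamStar / R0) *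
          (∫ a in Set.Ioc (0 : ℝ) astar, Real.exp (-(x + ρ) * a) * Real.cos (y * a)) ≠ 0 := by
  intro x hx y
  set z : ℂ := ⟨-(x + ρ), y⟩
  have hz_re : z.re ≤ -ρ := show -(x + ρ) ≤ -ρ by linarith
  have hz : z ≠ 0 := fun h => by rw [h, Complex.zero_re] at hz_re; linarith
  have hR0_pos : 0 < R0 := by linarith
  rw [← intervalIntegral.integral_of_le hastar.le]
  change 1 + (R0 - 2) * (lamStar / R0) *
    (∫ a in (0 : ℝ)..astar, Real.exp (z.re * a) * Real.cos (z.im * a)) ≠ 0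
  refine ne_of_gt ?_
  rcases le_or_gt R0 2 with hR0_le | hR0_gt_two
  · have hJ : lamStar / R0 * ∫ a in (0 : ℝ)..astar, Real.exp (-ρ * a) = 1 := by
      have hE : Real.exp (-(ρ * astar)) < 1 := Real.exp_lt_one_iff.2 (by nlinarith)
      rw [integral_exp_neg_mul hρ.ne', hR0]
      field_simp [(sub_pos.2 hE).ne']
    have hI := abs_le.1 (abs_integral_exp_mul_cos_le hz_re hastar.le)
    have hL : 0 ≤ (2 - R0) * (lamStar / R0) := by positivity
    nlinarith [mul_le_mul_of_nonneg_left hI.2 hL]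
  · set K := (R0 - 2) * (lamStar / R0)
    have hK : 0 < K := by positivity
    have hK_le : K ≤ 2 * ρ * Real.exp (ρ * astar) := by
      have : K = lamStar - 2 * lamStar / R0 := by simp only [K]; field_simp
      have : 0 < 2 * lamStar / R0 := by positivity
      linarith
    calc 0 < 1 + K * (-z.re / ‖z‖ ^ 2 - Real.exp (z.re * astar) / ‖z‖) :=
          one_add_mul_sub_div_pos hK (norm_pos_iff.2 hz)
            (by simpa only [neg_neg] using
              mul_exp_neg_mul_sq_lt (s := -z.re) hρ (by linarith) hastar.le hK_le)
      _ ≤ _ := by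
          gcongr
          exact le_integral_exp_mul_cos hz astar

end Stmt16
end
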